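/- arXiv:1712.07052 — 4 statements merged into one kernel-verified Lean document; each statement's English description precedes it below -/
import Mathlib

section
/- Let (N,h) be a compact Riemannian metric space and consider the product metric space M = N × ℝ with distance d((x,s),(y,t))² = d_N(x,y)² + |s−t|². If γ : ℝ → M is a unit-speed line (i.e. d(γ(s),γ(t)) = |s−t| for all s,t) whose ℝ-component tends to −∞ as t → −∞ and to +∞ as t → +∞, and γ(0) = (x,0), then γ(t) = (x,t) for all t ∈ ℝ. -/
/-!
Write `γ t = (f t, σ t)`. The line condition reads `d(f s, f t)² + (σ t - σ s)² = (t - s)²`,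
so `σ` is `1`-Lipschitz, i.e. `g u = u - σ u` is monotone, and the defect
`(t - s)² - (σ t - σ s)² = (g t - g s) ((t - s) + (σ t - σ s))` is at most `(diam N)²`.
For `s ≤ t ≤ b` with `σ b ≥ σ s` this gives `(g t - g s) (b - s) ≤ (diam N)²`, and letting
`b → ∞` (where `σ b → ∞`) forces `g t = g s`. So `σ` is a translation, fixed by `σ 0 = 0`,
and then `d(f t, f 0) = 0`.
-/

open Filter

theorem monotone_id_sub_of_abs_sub_le {σ : ℝ → ℝ} (hlip : ∀ s t, |σ t - σ s| ≤ |t - s|) :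
    Monotone fun u => u - σ u := fun u v huv => by
  have := (abs_le.1 ((hlip u v).trans_eq (abs_of_nonneg (sub_nonneg.2 huv)))).2
  linarith

theorem id_sub_antitone_of_sq_defect_le {σ : ℝ → ℝ} {C : ℝ}
    (hlip : ∀ s t, |σ t - σ s| ≤ |t - s|) (hdefect : ∀ s t, (t - s) ^ 2 - (σ t - σ s) ^ 2 ≤ C)
    (htop : Tendsto σ atTop atTop) : Antitone fun u => u - σ u := by
  have hmono := monotone_id_sub_of_abs_sub_le hlip
  intro s t hst
  by_contra! hlt
  set δ := (t - σ t) - (s - σ s)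
  have hδ : 0 < δ := by linarith
  have hbound : ∀ᶠ b in atTop, δ * (b - s) ≤ C := by
    filter_upwards [eventually_ge_atTop t, htop.eventually_ge_atTop (σ s)] with b htb hσb
    have hδb : δ ≤ (b - σ b) - (s - σ s) := by linarith [hmono htb]
    calc δ * (b - s) ≤ ((b - σ b) - (s - σ s)) * ((b - s) + (σ b - σ s)) :=
          mul_le_mul hδb (by linarith) (by linarith) (by linarith)
      _ = (b - s) ^ 2 - (σ b - σ s) ^ 2 := by ring
      _ ≤ C := hdefect s b
  have hgrow : Tendsto (fun b => δ * (b - s)) atTop atTop :=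
    (tendsto_atTop_add_const_right _ _ tendsto_id).const_mul_atTop hδ
  obtain ⟨b, hb, hb'⟩ := (hbound.and (hgrow.eventually_gt_atTop C)).exists
  linarith

theorem sub_eq_sub_of_sq_defect_le {σ : ℝ → ℝ} {C : ℝ} (hlip : ∀ s t, |σ t - σ s| ≤ |t - s|)
    (hdefect : ∀ s t, (t - s) ^ 2 - (σ t - σ s) ^ 2 ≤ C) (htop : Tendsto σ atTop atTop)
    (s t : ℝ) : σ t - σ s = t - s := by
  have := constant_of_monotone_antitone (monotone_id_sub_of_abs_sub_le hlip)
    (id_sub_antitone_of_sq_defect_le hlip hdefect htop) s t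
  linarith

theorem snd_sub_snd_eq_of_sq_dist_add_sq_eq {N : Type*} [PseudoMetricSpace N] [BoundedSpace N]
    {γ : ℝ → N × ℝ}
    (hγ : ∀ s t, dist (γ s).1 (γ t).1 ^ 2 + ((γ t).2 - (γ s).2) ^ 2 = (t - s) ^ 2)
    (htop : Tendsto (fun t => (γ t).2) atTop atTop) (s t : ℝ) :
    (γ t).2 - (γ s).2 = t - s := by
  have hdist : ∀ u v, dist (γ u).1 (γ v).1 ≤ Metric.diam (Set.univ : Set N) := fun u v =>
    Metric.dist_le_diam_of_mem (Bornology.isBounded_univ.2 ‹_›) (Set.mem_univ _) (Set.mem_univ _)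
  refine sub_eq_sub_of_sq_defect_le (σ := fun t => (γ t).2)
    (C := Metric.diam (Set.univ : Set N) ^ 2) (fun u v => ?_) (fun u v => ?_) htop s t
  · exact sq_le_sq.1 (by nlinarith [hγ u v])
  · nlinarith [hγ u v, hdist u v, dist_nonneg (x := (γ u).1) (y := (γ v).1)]

theorem stmt0_general {N : Type*} [MetricSpace N] [CompactSpace N]
    (γ : ℝ → N × ℝ) (x : N)
    (hline : ∀ s t : ℝ,
      Real.sqrt (dist (γ s).1 (γ t).1 ^ 2 + |(γ s).2 - (γ t).2| ^ 2) = |s - t|)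
    (h0 : γ 0 = (x, 0))
    (htop : Filter.Tendsto (fun t => (γ t).2) Filter.atTop Filter.atTop) :
    ∀ t : ℝ, γ t = (x, t) := by
  have hγ : ∀ s t, dist (γ s).1 (γ t).1 ^ 2 + ((γ t).2 - (γ s).2) ^ 2 = (t - s) ^ 2 := by
    intro s t
    have h := congrArg (· ^ 2) (hline s t)
    simp only [sq_abs] at h
    rw [Real.sq_sqrt (by positivity)] at h
    linear_combination h
  intro t
  have hsnd : (γ t).2 = t := by
    simpa [h0] using snd_sub_snd_eq_of_sq_dist_add_sq_eq hγ htop 0 t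
  have hfst : dist (γ t).1 x = 0 := by
    have := hγ t 0
    rw [h0, hsnd] at this
    nlinarith [dist_nonneg (x := (γ t).1) (y := x)]
  exact Prod.ext (dist_eq_zero.1 hfst) hsnd

/-- In the ℓ²-product `N × ℝ` of a compact metric space `N` with the line,
any unit-speed line whose `ℝ`-component goes from `-∞` to `+∞` and which passes through
`(x, 0)` at time `0` is the vertical line `t ↦ (x, t)`. -/
theorem stmt0 {N : Type*} [MetricSpace N] [CompactSpace N]
    (γ : ℝ → N × ℝ) (x : N)
    (hline : ∀ s t : ℝ,
      Real.sqrt (dist (γ s).1 (γ t).1 ^ 2 + |(γ s).2 - (γ t).2| ^ 2) = |s - t|)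
    (h0 : γ 0 = (x, 0))
    (hbot : Filter.Tendsto (fun t => (γ t).2) Filter.atBot Filter.atBot)
    (htop : Filter.Tendsto (fun t => (γ t).2) Filter.atTop Filter.atTop) :
    ∀ t : ℝ, γ t = (x, t) :=
  stmt0_general γ x hline h0 htop
end

section
/- For every n ≥ 1, the group SL(n,ℤ) is generated by its elements of finite order. -/
/-!
A transvection `t = 1 + c • E i j` in `SL(n, R)`, `n ≥ 3`, is inverted by conjugation with the
diagonal matrix `d` that negates the coordinates `i` and `k` for a third index `k`; hence
`t = d * (d * t)` is a product of two involutions. For `n = 2` no such `d` has determinant `1`,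
and one uses instead that `SL(2, ℤ)` is generated by `S` and `T = S⁻¹ * (S * T)`, where
`S ^ 4 = (S * T) ^ 6 = 1`.

Transvections generate `SL(n, ℤ)`: the Euclidean algorithm, carried out by transvections, turns
the last column of `M` into a multiple `g • eₖ` of a basis vector, further transvections turn it
into `|g| • eₙ`, and `|g| = 1` because the result is invertible. Then `M = diag(M', 1) * U` with
`M' ∈ SL(n - 1, ℤ)` and `U` a product of transvections, and induction on `n` finishes the proof.
-/

open Matrix

namespace Subgroup

variable {G G' : Type*} [Group G] [Group G']

def torsionClosure (G : Type*) [Group G] : Subgroup G :=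
  closure {g : G | IsOfFinOrder g}

theorem map_torsionClosure_le (f : G →* G') : (torsionClosure G).map f ≤ torsionClosure G' := by
  rw [torsionClosure, MonoidHom.map_closure]
  exact closure_mono fun _ ⟨_, hg, hfg⟩ ↦ hfg ▸ f.isOfFinOrder hg

theorem torsionClosure_eq_top_of_surjective {f : G →* G'} (hf : Function.Surjective f)
    (h : torsionClosure G = ⊤) : torsionClosure G' = ⊤ := by
  rw [eq_top_iff, ← f.range_eq_top.2 hf, f.range_eq_map, ← h]
  exact map_torsionClosure_le f

theorem mem_torsionClosure_of_mul_mul_eq_inv {d t : G} (hd : d * d = 1) (h : d * t * d = t⁻¹) :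
    t ∈ torsionClosure G := by
  have hd' : IsOfFinOrder d := isOfFinOrder_iff_pow_eq_one.2 ⟨2, two_pos, by rw [sq, hd]⟩
  have hdt : IsOfFinOrder (d * t) := isOfFinOrder_iff_pow_eq_one.2
    ⟨2, two_pos, by rw [sq, ← mul_assoc, h, inv_mul_cancel]⟩
  have ht : t = d * (d * t) := by rw [← mul_assoc, hd, one_mul]
  rw [ht]
  exact mul_mem (subset_closure hd') (subset_closure hdt)

end Subgroup

open Subgroup

namespace Matrix.SpecialLinearGroup

open ModularGroup MatrixGroups in
theorem torsionClosure_SL2Z : torsionClosure SL(2, ℤ) = ⊤ := by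
  have hS : S ∈ torsionClosure SL(2, ℤ) :=
    subset_closure (isOfFinOrder_iff_pow_eq_one.2 ⟨4, by norm_num, by decide⟩)
  have hST : S * T ∈ torsionClosure SL(2, ℤ) :=
    subset_closure (isOfFinOrder_iff_pow_eq_one.2 ⟨6, by norm_num, by decide⟩)
  rw [eq_top_iff, ← _root_.SpecialLinearGroup.SL2Z_generators, closure_le,
    Set.insert_subset_iff, Set.singleton_subset_iff]
  refine ⟨hS, ?_⟩
  rw [← inv_mul_cancel_left S T]
  exact mul_mem (inv_mem hS) hST

variable {ι R : Type*} [Fintype ι] [DecidableEq ι] [CommRing R]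

theorem transvection_mem_torsionClosure (hι : 3 ≤ Fintype.card ι) {i j : ι} (hij : i ≠ j)
    (c : R) : transvection hij c ∈ torsionClosure (SpecialLinearGroup ι R) := by
  obtain ⟨k, hk, hkj⟩ := (Finset.univ.erase i).exists_mem_ne (by
    rw [Finset.card_erase_of_mem (Finset.mem_univ i), Finset.card_univ]; omega) j
  have hki := Finset.ne_of_mem_erase hk
  let f : ι → R := fun x ↦ (if x = i then -1 else 1) * (if x = k then -1 else 1)
  have hff : ∀ x, f x * f x = 1 := fun x ↦ by simp only [f]; split_ifs <;> norm_num
  have hfij : f i * f j = -1 := by simp [f, hij.symm, hki.symm, hkj.symm]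
  let d : SpecialLinearGroup ι R := ⟨diagonal f, by
    rw [det_diagonal, Finset.prod_mul_distrib]; simp [Finset.prod_ite_eq']⟩
  apply mem_torsionClosure_of_mul_mul_eq_inv (d := d)
  · refine Subtype.ext ?_
    change diagonal f * diagonal f = 1
    rw [diagonal_mul_diagonal, funext hff, diagonal_one]
  · ext a b
    rw [transvection_inv, coe_mul, coe_mul, mul_diagonal, diagonal_mul]
    rcases eq_or_ne a b with rfl | hab
    · have : ¬(i = a ∧ j = a) := fun h ↦ hij (h.1.trans h.2.symm)
      simp [transvection_coe, this, hff]
    · by_cases h : i = a ∧ j = b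
      · obtain ⟨rfl, rfl⟩ := h
        simp [transvection_coe, hij]
        linear_combination c * hfij
      · simp [transvection_coe, hab, h]

theorem transvection_mulVec {i j : ι} (hij : i ≠ j) (c : R) (v : ι → R) :
    (transvection hij c : Matrix ι ι R) *ᵥ v = v + Pi.single i (c * v j) := by
  simp [transvection_coe, add_mulVec, single_mulVec]; rfl

section Euclid

variable {K : Subgroup (SpecialLinearGroup ι ℤ)}

theorem transvection_mulVec_eq_update_emod {i j : ι} (hij : i ≠ j) (v : ι → ℤ) :
    (transvection hij (-(v i / v j)) : Matrix ι ι ℤ) *ᵥ v = Function.update v i (v i % v j) := by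
  rw [transvection_mulVec]
  ext x
  rcases eq_or_ne x i with rfl | hx
  · simp [Int.emod_def]
    ring
  · simp [hx]

theorem exists_mem_mulVec_eq_single [Nonempty ι]
    (hK : ∀ ⦃i j : ι⦄ (hij : i ≠ j) (c : ℤ), transvection hij c ∈ K) (v : ι → ℤ) :
    ∃ h ∈ K, ∃ q g, (h : Matrix ι ι ℤ) *ᵥ v = Pi.single q g := by
  induction hN : ∑ i, (v i).natAbs using Nat.strong_induction_on generalizing v with
  | _ N ih =>
  by_cases hpair : ∃ i j, i ≠ j ∧ v j ≠ 0 ∧ (v j).natAbs ≤ (v i).natAbs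
  · obtain ⟨i, j, hij, hj, hji⟩ := hpair
    have hi : (v i % v j).natAbs < (v i).natAbs := by
      have := Int.emod_lt (v i) hj
      have := Int.emod_nonneg (v i) hj
      omega
    have hlt : ∑ x, (Function.update v i (v i % v j) x).natAbs < N := by
      rw [← hN]
      refine Finset.sum_lt_sum (fun x _ ↦ ?_) ⟨i, Finset.mem_univ i, by simpa using hi⟩
      rcases eq_or_ne x i with rfl | hx
      · simpa using hi.le
      · rw [Function.update_of_ne hx]
    obtain ⟨h, hh, q, g, hq⟩ := ih _ hlt _ rfl
    refine ⟨h * transvection hij (-(v i / v j)), mul_mem hh (hK hij _), q, g, ?_⟩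
    rw [coe_mul, ← mulVec_mulVec, transvection_mulVec_eq_update_emod, hq]
  · push Not at hpair
    by_cases hv : v = 0
    · exact ⟨1, one_mem _, Classical.arbitrary ι, 0, by simp [hv]⟩
    obtain ⟨q, hq⟩ := Function.ne_iff.1 hv
    refine ⟨1, one_mem _, q, v q, ?_⟩
    ext x
    rw [coe_one, one_mulVec]
    rcases eq_or_ne x q with rfl | hx
    · simp
    · rw [Pi.single_eq_of_ne hx]
      by_contra hvx
      rcases le_total (v x).natAbs (v q).natAbs with hle | hle
      · exact hpair q x hx.symm hvx |>.not_ge hle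
      · exact hpair x q hx hq |>.not_ge hle

theorem exists_mem_mulVec_single_eq_single_abs
    (hK : ∀ ⦃i j : ι⦄ (hij : i ≠ j) (c : ℤ), transvection hij c ∈ K) {r p : ι} (hrp : r ≠ p)
    (a : ℤ) : ∃ h ∈ K, (h : Matrix ι ι ℤ) *ᵥ Pi.single r a = Pi.single p |a| := by
  refine ⟨transvection hrp (-a.sign) * transvection hrp.symm a.sign,
    mul_mem (hK _ _) (hK _ _), ?_⟩
  rw [coe_mul, ← mulVec_mulVec, transvection_mulVec, transvection_mulVec]
  simp [hrp, Int.sign_mul_abs]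
  rw [Pi.single_neg, add_right_comm, add_neg_cancel, zero_add]

theorem exists_mem_mulVec_eq_single_nonneg
    (hK : ∀ ⦃i j : ι⦄ (hij : i ≠ j) (c : ℤ), transvection hij c ∈ K) {p p' : ι} (hpp' : p ≠ p')
    (v : ι → ℤ) : ∃ h ∈ K, ∃ g, 0 ≤ g ∧ (h : Matrix ι ι ℤ) *ᵥ v = Pi.single p g := by
  have : Nonempty ι := ⟨p⟩
  obtain ⟨h, hh, q, g, hq⟩ := exists_mem_mulVec_eq_single hK v
  obtain ⟨h', hh', hq'⟩ : ∃ h' ∈ K, (h' : Matrix ι ι ℤ) *ᵥ Pi.single q g = Pi.single p |g| := by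
    rcases eq_or_ne q p with rfl | hqp
    · obtain ⟨h₁, hh₁, h1⟩ := exists_mem_mulVec_single_eq_single_abs hK hpp' g
      obtain ⟨h₂, hh₂, h2⟩ := exists_mem_mulVec_single_eq_single_abs hK hpp'.symm |g|
      exact ⟨h₂ * h₁, mul_mem hh₂ hh₁, by rw [coe_mul, ← mulVec_mulVec, h1, h2, abs_abs]⟩
    · exact exists_mem_mulVec_single_eq_single_abs hK hqp g
  exact ⟨h' * h, mul_mem hh' hh, |g|, abs_nonneg g, by rw [coe_mul, ← mulVec_mulVec, hq, hq']⟩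

end Euclid

theorem eq_one_of_mulVec_single_eq_single (N : SpecialLinearGroup ι ℤ) {p : ι} {g : ℤ}
    (hg : 0 ≤ g) (hN : (N : Matrix ι ι ℤ) *ᵥ Pi.single p 1 = Pi.single p g) : g = 1 := by
  have h := congr_arg (((N⁻¹ : SpecialLinearGroup ι ℤ) : Matrix ι ι ℤ) *ᵥ ·) hN
  simp only [mulVec_mulVec, ← coe_mul, inv_mul_cancel, coe_one, one_mulVec] at h
  rw [← mul_one g, ← smul_eq_mul, Pi.single_smul, mulVec_smul] at h
  have hp := congr_fun h p
  simp only [Pi.single_eq_same, Pi.smul_apply, smul_eq_mul] at hp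
  exact Int.eq_one_of_mul_eq_one_right hg hp.symm


section Blocks

variable {κ μ : Type*} [Fintype κ] [DecidableEq κ] [Fintype μ] [DecidableEq μ]

def fromBlocks₁₁Hom : SpecialLinearGroup κ R →* SpecialLinearGroup (κ ⊕ μ) R where
  toFun A := ⟨fromBlocks A 0 0 1, by simp⟩
  map_one' := Subtype.ext fromBlocks_one
  map_mul' A B := Subtype.ext <| by
    change _ = fromBlocks _ 0 0 1 * fromBlocks _ 0 0 1
    simp [fromBlocks_multiply]

def fromBlocks₂₁Hom : Multiplicative (Matrix μ κ R) →* SpecialLinearGroup (κ ⊕ μ) R where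
  toFun C := ⟨fromBlocks 1 0 C.toAdd 1, by simp⟩
  map_one' := Subtype.ext (by simp)
  map_mul' C D := Subtype.ext <| by
    change _ = fromBlocks 1 0 _ 1 * fromBlocks 1 0 _ 1
    simp [fromBlocks_multiply, add_comm]

@[simp]
theorem coe_fromBlocks₂₁Hom (C : Multiplicative (Matrix μ κ R)) :
    ((fromBlocks₂₁Hom C : SpecialLinearGroup (κ ⊕ μ) R) : Matrix (κ ⊕ μ) (κ ⊕ μ) R) =
      fromBlocks 1 0 C.toAdd 1 :=
  rfl

theorem fromBlocks₂₁Hom_ofAdd_single (a : μ) (k : κ) (c : R) :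
    fromBlocks₂₁Hom (.ofAdd (single a k c)) =
      transvection (Sum.inr_ne_inl : (.inr a : κ ⊕ μ) ≠ .inl k) c := by
  refine Subtype.ext ?_
  ext (x | x) (y | y) <;> simp [transvection_coe, single_apply, one_apply]

theorem fromBlocks₂₁Hom_mem {K : Subgroup (SpecialLinearGroup (κ ⊕ μ) R)}
    (hK : ∀ ⦃i j : κ ⊕ μ⦄ (hij : i ≠ j) (c : R), transvection hij c ∈ K) (C : Matrix μ κ R) :
    fromBlocks₂₁Hom (.ofAdd C) ∈ K := by
  change Multiplicative.ofAdd C ∈ K.comap fromBlocks₂₁Hom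
  rw [matrix_eq_sum_single C, ofAdd_sum]
  refine prod_mem fun a _ ↦ ?_
  rw [ofAdd_sum]
  exact prod_mem fun k _ ↦ by simpa [fromBlocks₂₁Hom_ofAdd_single] using hK _ _

theorem exists_eq_fromBlocks₁₁Hom_mul_fromBlocks₂₁Hom (N : SpecialLinearGroup (κ ⊕ μ) R)
    (hN : ∀ m, (N : Matrix (κ ⊕ μ) (κ ⊕ μ) R) *ᵥ Pi.single (.inr m) 1 = Pi.single (.inr m) 1) :
    ∃ A C, N = fromBlocks₁₁Hom A * fromBlocks₂₁Hom (.ofAdd C) := by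
  obtain ⟨M, hM⟩ := N
  have hcol : ∀ x m, M x (.inr m) = (1 : Matrix (κ ⊕ μ) (κ ⊕ μ) R) x (.inr m) := fun x m ↦ by
    simpa [one_apply, Pi.single_apply, eq_comm] using congr_fun (hN m) x
  have hblocks : M = fromBlocks M.toBlocks₁₁ 0 M.toBlocks₂₁ 1 := by
    conv_lhs => rw [← fromBlocks_toBlocks M]
    congr 1
    · ext x m; simp [toBlocks₁₂, hcol]
    · ext m m'; simp [toBlocks₂₂, hcol, one_apply]
  have hdet : M.toBlocks₁₁.det = 1 := by
    rwa [hblocks, det_fromBlocks_zero₁₂, det_one, mul_one] at hM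
  refine ⟨⟨_, hdet⟩, M.toBlocks₂₁, Subtype.ext ?_⟩
  change M = fromBlocks M.toBlocks₁₁ 0 0 1 * fromBlocks 1 0 M.toBlocks₂₁ 1
  rw [fromBlocks_multiply]
  conv_lhs => rw [hblocks]
  simp

end Blocks

theorem torsionClosure_eq_top_of_equiv {ι' : Type*} [Fintype ι'] [DecidableEq ι'] (e : ι ≃ ι')
    (h : torsionClosure (SpecialLinearGroup ι R) = ⊤) :
    torsionClosure (SpecialLinearGroup ι' R) = ⊤ :=
  torsionClosure_eq_top_of_surjective (f := (toLin'_equiv.trans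
    ((_root_.SpecialLinearGroup.congr_linearEquiv (LinearEquiv.funCongrLeft R R e.symm)).trans
      toLin'_equiv.symm)).toMonoidHom) (MulEquiv.surjective _) h

theorem torsionClosure_sum_unit_eq_top {κ : Type*} [Fintype κ] [DecidableEq κ]
    (hκ : 2 ≤ Fintype.card κ) (htop : torsionClosure (SpecialLinearGroup κ ℤ) = ⊤) :
    torsionClosure (SpecialLinearGroup (κ ⊕ Unit) ℤ) = ⊤ := by
  set K := torsionClosure (SpecialLinearGroup (κ ⊕ Unit) ℤ)
  have hK : ∀ ⦃i j : κ ⊕ Unit⦄ (hij : i ≠ j) (c : ℤ), transvection hij c ∈ K :=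
    fun _ _ hij ↦ transvection_mem_torsionClosure (by simp; omega) hij
  obtain ⟨k₀⟩ : Nonempty κ := Fintype.card_pos_iff.1 (by omega)
  rw [eq_top_iff']
  intro M
  obtain ⟨h, hh, g, hg, hhM⟩ := exists_mem_mulVec_eq_single_nonneg hK
    (Sum.inr_ne_inl : (.inr () : κ ⊕ Unit) ≠ .inl k₀)
    ((M : Matrix (κ ⊕ Unit) (κ ⊕ Unit) ℤ) *ᵥ Pi.single (.inr ()) 1)
  rw [mulVec_mulVec, ← coe_mul] at hhM
  obtain rfl := eq_one_of_mulVec_single_eq_single _ hg hhM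
  obtain ⟨A, C, hAC⟩ := exists_eq_fromBlocks₁₁Hom_mul_fromBlocks₂₁Hom (h * M) fun _ ↦ hhM
  have hA : fromBlocks₁₁Hom A ∈ K := map_torsionClosure_le _ ⟨A, htop ▸ mem_top A, rfl⟩
  have hhM' : h * M ∈ K := hAC ▸ mul_mem hA (fromBlocks₂₁Hom_mem hK C)
  simpa using mul_mem (inv_mem hh) hhM'

theorem torsionClosure_fin_eq_top : ∀ n, torsionClosure (SpecialLinearGroup (Fin n) ℤ) = ⊤
  | 0 | 1 => Subsingleton.elim _ _
  | 2 => torsionClosure_SL2Z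
  | n + 3 => torsionClosure_eq_top_of_equiv (Fintype.equivOfCardEq (by simp))
      (torsionClosure_sum_unit_eq_top (by simp) (torsionClosure_fin_eq_top (n + 2)))

theorem torsionClosure_eq_top (ι : Type*) [Fintype ι] [DecidableEq ι] :
    torsionClosure (SpecialLinearGroup ι ℤ) = ⊤ :=
  torsionClosure_eq_top_of_equiv (Fintype.equivFin ι).symm (torsionClosure_fin_eq_top _)

end Matrix.SpecialLinearGroup

theorem stmt2_general (n : ℕ) :
    Subgroup.closure {g : Matrix.SpecialLinearGroup (Fin n) ℤ | IsOfFinOrder g} = ⊤ :=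
  Matrix.SpecialLinearGroup.torsionClosure_eq_top (Fin n)

/-- For every `n ≥ 1`, `SL(n, ℤ)` is generated by its elements of finite order. -/
theorem stmt2 (n : ℕ) (hn : 1 ≤ n) :
    Subgroup.closure {g : Matrix.SpecialLinearGroup (Fin n) ℤ | IsOfFinOrder g} = ⊤ :=
  stmt2_general n
end

section
/- For every n ≥ 1, the group GL(n,ℤ) is generated by its elements of finite order. Consequently, the normal subgroup of GL(n,ℤ) generated by all elements of finite order equals GL(n,ℤ) itself. -/
open Matrix

namespace Stmt4Aux

variable {n : ℕ}

abbrev HH (n : ℕ) : Subgroup (GL (Fin n) ℤ) :=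
  Subgroup.closure {g : GL (Fin n) ℤ | IsOfFinOrder g}

lemma mem_of_sq {g : GL (Fin n) ℤ} (h : g * g = 1) : g ∈ HH n :=
  Subgroup.subset_closure (isOfFinOrder_iff_pow_eq_one.mpr ⟨2, two_pos, by rwa [pow_two]⟩)

def tvU (i j : Fin n) (hij : i ≠ j) (c : ℤ) : GL (Fin n) ℤ where
  val := transvection i j c
  inv := transvection i j (-c)
  val_inv := (transvection_mul_transvection_same i j hij c (-c)).trans
    (by rw [add_neg_cancel, transvection_zero])
  inv_val := (transvection_mul_transvection_same i j hij (-c) c).trans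
    (by rw [neg_add_cancel, transvection_zero])

private lemma diag_sq (i₀ : Fin n) :
    (diagonal fun x => if x = i₀ then (-1:ℤ) else 1) *
      (diagonal fun x => if x = i₀ then (-1:ℤ) else 1) = 1 := by
  rw [diagonal_mul_diagonal]
  ext a b
  rcases eq_or_ne a b with rfl | hab
  · rw [diagonal_apply_eq, one_apply_eq]
    by_cases h : a = i₀ <;> simp [h]
  · rw [diagonal_apply_ne _ hab, one_apply_ne hab]

def sgnU (i₀ : Fin n) : GL (Fin n) ℤ where
  val := diagonal fun x => if x = i₀ then -1 else 1
  inv := diagonal fun x => if x = i₀ then -1 else 1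
  val_inv := diag_sq i₀
  inv_val := diag_sq i₀

private lemma perm_sq (a b : Fin n) :
    ((Equiv.swap a b).permMatrix ℤ) * ((Equiv.swap a b).permMatrix ℤ) = 1 := by
  rw [Equiv.Perm.permMatrix, ← PEquiv.toMatrix_trans, ← Equiv.toPEquiv_trans, Equiv.swap_swap,
    Equiv.toPEquiv_refl, PEquiv.toMatrix_refl]

def swapU (a b : Fin n) : GL (Fin n) ℤ where
  val := (Equiv.swap a b).permMatrix ℤ
  inv := (Equiv.swap a b).permMatrix ℤ
  val_inv := perm_sq a b
  inv_val := perm_sq a b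

lemma sgnU_mem (i₀ : Fin n) : sgnU i₀ ∈ HH n :=
  mem_of_sq (Units.ext (sgnU i₀).val_inv)

lemma swapU_mem (a b : Fin n) : swapU a b ∈ HH n :=
  mem_of_sq (Units.ext (swapU a b).val_inv)

private lemma key_dtd (i j : Fin n) (hij : i ≠ j) (c : ℤ) :
    (diagonal fun x => if x = i then (-1:ℤ) else 1) * (transvection i j c *
      (diagonal fun x => if x = i then (-1:ℤ) else 1)) = transvection i j (-c) := by
  ext a b
  rw [diagonal_mul, mul_diagonal]
  simp only [transvection, Matrix.add_apply, Matrix.one_apply, single, of_apply]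
  split_ifs <;> first | ring1 | (simp only [Fin.ext_iff] at *; omega)

lemma tvU_mem (i j : Fin n) (hij : i ≠ j) (c : ℤ) : tvU i j hij c ∈ HH n := by
  have hsq : (sgnU i * tvU i j hij c) * (sgnU i * tvU i j hij c) = 1 := by
    apply Units.ext
    show ((sgnU i).val * (tvU i j hij c).val) * ((sgnU i).val * (tvU i j hij c).val)
        = (1 : Matrix (Fin n) (Fin n) ℤ)
    have hassoc : ((sgnU i).val * (tvU i j hij c).val) * ((sgnU i).val * (tvU i j hij c).val)
        = ((sgnU i).val * ((tvU i j hij c).val * (sgnU i).val)) * (tvU i j hij c).val := by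
      noncomm_ring
    rw [hassoc]
    show ((diagonal fun x => if x = i then (-1:ℤ) else 1) * (transvection i j c *
      (diagonal fun x => if x = i then (-1:ℤ) else 1))) * transvection i j c = 1
    rw [key_dtd i j hij c]
    exact (tvU i j hij c).inv_val
  have h1 : sgnU i * sgnU i = 1 := Units.ext (sgnU i).val_inv
  have h2 : tvU i j hij c = sgnU i * (sgnU i * tvU i j hij c) := by
    rw [← mul_assoc, h1, one_mul]
  rw [h2]
  exact mul_mem (sgnU_mem i) (mem_of_sq hsq)

lemma main : ∀ d k : ℕ, n - k = d → ∀ g : GL (Fin n) ℤ,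
    (∀ j : Fin n, (j : ℕ) < k → ∀ i : Fin n,
      (g : Matrix (Fin n) (Fin n) ℤ) i j = if i = j then 1 else 0) →
    g ∈ HH n := by
  intro d
  induction d using Nat.strong_induction_on with
  | _ d ihd =>
  intro k hk g hg
  by_cases hkn : n ≤ k
  · have hgone : g = 1 := by
      apply Units.ext
      ext a b
      have := hg b (lt_of_lt_of_le b.isLt hkn) a
      simpa [Matrix.one_apply] using this
    rw [hgone]; exact one_mem _
  · push_neg at hkn
    have hd : n - (k + 1) < d := by omega
    set K : Fin n := ⟨k, hkn⟩ with hKdef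
    suffices Hm : ∀ m : ℕ, ∀ g : GL (Fin n) ℤ,
        (∀ j : Fin n, (j : ℕ) < k → ∀ i : Fin n,
          (g : Matrix (Fin n) (Fin n) ℤ) i j = if i = j then 1 else 0) →
        (∑ i : Fin n, ((g : Matrix (Fin n) (Fin n) ℤ) i K).natAbs) = m → g ∈ HH n by
      exact Hm _ g hg rfl
    clear hg g
    intro m
    induction m using Nat.strong_induction_on with
    | _ m ihm =>
    intro g hg hm
    have hBA : ((g⁻¹ : GL (Fin n) ℤ) : Matrix (Fin n) (Fin n) ℤ)
        * (g : Matrix (Fin n) (Fin n) ℤ) = 1 := by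
      rw [← Units.val_mul, inv_mul_cancel, Units.val_one]
    -- generic transvection step
    have step : ∀ (i₁ i₂ : Fin n) (hne : i₁ ≠ i₂) (c : ℤ), k ≤ (i₂ : ℕ) →
        ((g : Matrix (Fin n) (Fin n) ℤ) i₁ K + c * (g : Matrix (Fin n) (Fin n) ℤ) i₂ K).natAbs
          < ((g : Matrix (Fin n) (Fin n) ℤ) i₁ K).natAbs →
        g ∈ HH n := by
      intro i₁ i₂ hne c hk2 hlt
      have hval : ∀ r s : Fin n, ((tvU i₁ i₂ hne c * g : GL (Fin n) ℤ)
            : Matrix (Fin n) (Fin n) ℤ) r s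
          = if r = i₁ then (g : Matrix (Fin n) (Fin n) ℤ) i₁ s
              + c * (g : Matrix (Fin n) (Fin n) ℤ) i₂ s
            else (g : Matrix (Fin n) (Fin n) ℤ) r s := by
        intro r s
        rw [Units.val_mul]
        show (transvection i₁ i₂ c * (g : Matrix (Fin n) (Fin n) ℤ)) r s = _
        rcases eq_or_ne r i₁ with rfl | hr
        · rw [if_pos rfl, transvection_mul_apply_same]
        · rw [if_neg hr, transvection_mul_apply_of_ne i₁ i₂ r s hr]
      have hg' : ∀ j : Fin n, (j : ℕ) < k → ∀ i : Fin n,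
          ((tvU i₁ i₂ hne c * g : GL (Fin n) ℤ) : Matrix (Fin n) (Fin n) ℤ) i j
            = if i = j then 1 else 0 := by
        intro j hj i
        rw [hval i j]
        rcases eq_or_ne i i₁ with rfl | hi
        · rw [if_pos rfl, hg j hj i₂, if_neg (by rintro rfl; omega), mul_zero, add_zero,
            hg j hj i]
        · rw [if_neg hi, hg j hj i]
      have hmeas : (∑ i : Fin n, (((tvU i₁ i₂ hne c * g : GL (Fin n) ℤ)
          : Matrix (Fin n) (Fin n) ℤ) i K).natAbs) < m := by
        rw [← hm]
        apply Finset.sum_lt_sum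
        · intro i _
          rw [hval i K]
          rcases eq_or_ne i i₁ with rfl | hi
          · rw [if_pos rfl]; exact hlt.le
          · rw [if_neg hi]
        · exact ⟨i₁, Finset.mem_univ _, by rw [hval i₁ K, if_pos rfl]; exact hlt⟩
      have := ihm _ hmeas (tvU i₁ i₂ hne c * g) hg' rfl
      exact (mul_mem_cancel_left (tvU_mem i₁ i₂ hne c)).mp this
    by_cases hP : ∃ i₁ i₂ : Fin n, i₁ ≠ i₂ ∧ k ≤ (i₁ : ℕ) ∧ k ≤ (i₂ : ℕ) ∧
        (g : Matrix (Fin n) (Fin n) ℤ) i₁ K ≠ 0 ∧ (g : Matrix (Fin n) (Fin n) ℤ) i₂ K ≠ 0 ∧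
        ((g : Matrix (Fin n) (Fin n) ℤ) i₂ K).natAbs ≤ ((g : Matrix (Fin n) (Fin n) ℤ) i₁ K).natAbs
    · obtain ⟨i₁, i₂, hne, hk1, hk2, ha, hb, hle⟩ := hP
      set a := (g : Matrix (Fin n) (Fin n) ℤ) i₁ K with hadef
      set b := (g : Matrix (Fin n) (Fin n) ℤ) i₂ K with hbdef
      apply step i₁ i₂ hne (-(a / b)) hk2
      have hab : a + -(a / b) * b = a % b := by rw [Int.emod_def]; ring
      rw [← hadef, ← hbdef, hab]
      have h1 : 0 ≤ a % b := Int.emod_nonneg a hb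
      have h2 : a % b < (b.natAbs : ℤ) := by
        rcases hb.lt_or_gt with hbneg | hbpos
        · have h := Int.emod_lt_of_pos a (b := -b) (by omega)
          rw [Int.emod_neg] at h
          omega
        · have h := Int.emod_lt_of_pos a hbpos
          omega
      omega
    · push_neg at hP
      -- existence of a nonzero entry in rows ≥ k
      have hsum : (∑ x : Fin n, ((g⁻¹ : GL (Fin n) ℤ) : Matrix (Fin n) (Fin n) ℤ) K x
          * (g : Matrix (Fin n) (Fin n) ℤ) x K) = 1 := by
        have h1 : (((g⁻¹ : GL (Fin n) ℤ) : Matrix (Fin n) (Fin n) ℤ)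
            * (g : Matrix (Fin n) (Fin n) ℤ)) K K = (1 : Matrix (Fin n) (Fin n) ℤ) K K := by
          rw [hBA]
        rw [Matrix.mul_apply, one_apply_eq] at h1
        exact h1
      have hB : ∀ l : Fin n, (l : ℕ) < k →
          ((g⁻¹ : GL (Fin n) ℤ) : Matrix (Fin n) (Fin n) ℤ) K l = 0 := by
        intro l hl
        have h1 : (((g⁻¹ : GL (Fin n) ℤ) : Matrix (Fin n) (Fin n) ℤ)
            * (g : Matrix (Fin n) (Fin n) ℤ)) K l = (1 : Matrix (Fin n) (Fin n) ℤ) K l := by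
          rw [hBA]
        rw [Matrix.mul_apply] at h1
        have h2 : (∑ x : Fin n, ((g⁻¹ : GL (Fin n) ℤ) : Matrix (Fin n) (Fin n) ℤ) K x
            * (g : Matrix (Fin n) (Fin n) ℤ) x l)
            = ((g⁻¹ : GL (Fin n) ℤ) : Matrix (Fin n) (Fin n) ℤ) K l := by
          rw [Finset.sum_eq_single l]
          · rw [hg l hl l, if_pos rfl, mul_one]
          · intro x _ hx
            rw [hg l hl x, if_neg hx, mul_zero]
          · intro h; exact absurd (Finset.mem_univ l) h
        rw [h2] at h1
        rw [h1, one_apply_ne]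
        intro e
        have h3 : (K : ℕ) = (l : ℕ) := by rw [e]
        have h4 : (K : ℕ) = k := rfl
        omega
      have hex : ∃ i₀ : Fin n, k ≤ (i₀ : ℕ) ∧ (g : Matrix (Fin n) (Fin n) ℤ) i₀ K ≠ 0 := by
        by_contra hno
        push_neg at hno
        have hz : ∀ x : Fin n, ((g⁻¹ : GL (Fin n) ℤ) : Matrix (Fin n) (Fin n) ℤ) K x
            * (g : Matrix (Fin n) (Fin n) ℤ) x K = 0 := by
          intro x
          rcases lt_or_ge (x : ℕ) k with hx | hx
          · rw [hB x hx, zero_mul]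
          · rw [hno x hx, mul_zero]
        rw [Finset.sum_congr rfl (fun x _ => hz x), Finset.sum_const_zero] at hsum
        exact one_ne_zero hsum.symm
      obtain ⟨i₀, hk0, ha0⟩ := hex
      have huniq : ∀ i : Fin n, k ≤ (i : ℕ) → i ≠ i₀ →
          (g : Matrix (Fin n) (Fin n) ℤ) i K = 0 := by
        intro i hi hne
        by_contra hnz
        have h1 := hP i i₀ hne hi hk0 hnz ha0
        have h2 := hP i₀ i hne.symm hk0 hi ha0 hnz
        omega
      have hpiv : ((g⁻¹ : GL (Fin n) ℤ) : Matrix (Fin n) (Fin n) ℤ) K i₀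
          * (g : Matrix (Fin n) (Fin n) ℤ) i₀ K = 1 := by
        rw [← hsum]
        symm
        apply Finset.sum_eq_single i₀
        · intro x _ hx
          rcases lt_or_ge (x : ℕ) k with h | h
          · rw [hB x h, zero_mul]
          · rw [huniq x h hx, mul_zero]
        · intro h; exact absurd (Finset.mem_univ i₀) h
      have haunit : (g : Matrix (Fin n) (Fin n) ℤ) i₀ K = 1
          ∨ (g : Matrix (Fin n) (Fin n) ℤ) i₀ K = -1 :=
        Int.isUnit_iff.mp (IsUnit.of_mul_eq_one _ (by rw [mul_comm]; exact hpiv))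
      by_cases hrows : ∃ i : Fin n, (i : ℕ) < k ∧ (g : Matrix (Fin n) (Fin n) ℤ) i K ≠ 0
      · obtain ⟨i, hik, hnz⟩ := hrows
        have hne : i ≠ i₀ := by intro e; rw [e] at hik; omega
        have hz : (g : Matrix (Fin n) (Fin n) ℤ) i K
            + (-((g : Matrix (Fin n) (Fin n) ℤ) i K * (g : Matrix (Fin n) (Fin n) ℤ) i₀ K))
              * (g : Matrix (Fin n) (Fin n) ℤ) i₀ K = 0 := by
          rcases haunit with h | h <;> rw [h] <;> ring
        apply step i i₀ hne
          (-((g : Matrix (Fin n) (Fin n) ℤ) i K * (g : Matrix (Fin n) (Fin n) ℤ) i₀ K)) hk0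
        rw [hz]
        simpa using Int.natAbs_pos.mpr hnz
      · push_neg at hrows
        have hcolK : ∀ i : Fin n, i ≠ i₀ → (g : Matrix (Fin n) (Fin n) ℤ) i K = 0 := by
          intro i hi
          rcases lt_or_ge (i : ℕ) k with h | h
          · exact hrows i h
          · exact huniq i h hi
        have hfin : ∀ h : GL (Fin n) ℤ,
            (∀ j : Fin n, (j : ℕ) < k → ∀ i : Fin n,
              (h : Matrix (Fin n) (Fin n) ℤ) i j = if i = j then 1 else 0) →
            (h : Matrix (Fin n) (Fin n) ℤ) i₀ K = 1 →
            (∀ i : Fin n, i ≠ i₀ → (h : Matrix (Fin n) (Fin n) ℤ) i K = 0) →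
            h ∈ HH n := by
          intro h hcols hpv hz
          have hval : ∀ r s : Fin n, ((swapU i₀ K * h : GL (Fin n) ℤ)
              : Matrix (Fin n) (Fin n) ℤ) r s
              = (h : Matrix (Fin n) (Fin n) ℤ) (Equiv.swap i₀ K r) s := by
            intro r s
            rw [Units.val_mul]
            show ((Equiv.swap i₀ K).permMatrix ℤ * (h : Matrix (Fin n) (Fin n) ℤ)) r s = _
            rw [Equiv.Perm.permMatrix, PEquiv.toMatrix_toPEquiv_mul]
            rfl
          have hcols' : ∀ j : Fin n, (j : ℕ) < k + 1 → ∀ i : Fin n,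
              ((swapU i₀ K * h : GL (Fin n) ℤ) : Matrix (Fin n) (Fin n) ℤ) i j
                = if i = j then 1 else 0 := by
            intro j hj i
            rw [hval i j]
            rcases lt_or_ge (j : ℕ) k with hjk | hjk
            · have hji₀ : j ≠ i₀ := by intro e; rw [e] at hjk; omega
              have hjK : j ≠ K := by
                intro e
                have : (j : ℕ) = k := by rw [e]
                omega
              rw [hcols j hjk]
              have e1 : Equiv.swap i₀ K i = j ↔ i = j := by
                rw [Equiv.apply_eq_iff_eq_symm_apply, Equiv.symm_swap,
                  Equiv.swap_apply_of_ne_of_ne hji₀ hjK]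
              rw [if_congr e1 rfl rfl]
            · have hjK : j = K := by
                apply Fin.ext
                show (j : ℕ) = k
                omega
              rw [hjK]
              rcases eq_or_ne i K with hiK | hiK
              · rw [hiK, Equiv.swap_apply_right, if_pos rfl, hpv]
              · rw [if_neg hiK]
                rcases eq_or_ne i i₀ with hii₀ | hii₀
                · rw [hii₀, Equiv.swap_apply_left]
                  apply hz
                  rw [← hii₀]
                  exact Ne.symm hiK
                · rw [Equiv.swap_apply_of_ne_of_ne hii₀ hiK]
                  exact hz i hii₀
          have := ihd (n - (k + 1)) hd (k + 1) rfl (swapU i₀ K * h) hcols'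
          exact (mul_mem_cancel_left (swapU_mem i₀ K)).mp this
        rcases haunit with h1 | hm1
        · exact hfin g hg h1 hcolK
        · have hval : ∀ r s : Fin n, ((sgnU i₀ * g : GL (Fin n) ℤ)
              : Matrix (Fin n) (Fin n) ℤ) r s
              = (if r = i₀ then -1 else 1) * (g : Matrix (Fin n) (Fin n) ℤ) r s := by
            intro r s
            rw [Units.val_mul]
            show ((diagonal fun x => if x = i₀ then (-1:ℤ) else 1)
              * (g : Matrix (Fin n) (Fin n) ℤ)) r s = _
            rw [diagonal_mul]
          have hcols2 : ∀ j : Fin n, (j : ℕ) < k → ∀ i : Fin n,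
              ((sgnU i₀ * g : GL (Fin n) ℤ) : Matrix (Fin n) (Fin n) ℤ) i j
                = if i = j then 1 else 0 := by
            intro j hj i
            rw [hval i j, hg j hj i]
            by_cases hi : i = i₀
            · have hik : k ≤ (i : ℕ) := by rw [hi]; exact hk0
              have hij' : ¬ i = j := fun e => by rw [e] at hik; omega
              rw [if_pos hi, if_neg hij', mul_zero]
            · rw [if_neg hi, one_mul]
          have hpv2 : ((sgnU i₀ * g : GL (Fin n) ℤ) : Matrix (Fin n) (Fin n) ℤ) i₀ K = 1 := by
            rw [hval, if_pos rfl, hm1]; ring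
          have hz2 : ∀ i : Fin n, i ≠ i₀ →
              ((sgnU i₀ * g : GL (Fin n) ℤ) : Matrix (Fin n) (Fin n) ℤ) i K = 0 := by
            intro i hi
            rw [hval, if_neg hi, one_mul]
            exact hcolK i hi
          have := hfin (sgnU i₀ * g) hcols2 hpv2 hz2
          exact (mul_mem_cancel_left (sgnU_mem i₀)).mp this

end Stmt4Aux

/-- For every `n ≥ 1`, `GL(n, ℤ)` is generated by its elements of finite order;
consequently the normal subgroup generated by all elements of finite order is all of `GL(n,ℤ)`. -/
theorem stmt4 (n : ℕ) (hn : 1 ≤ n) :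
    Subgroup.closure {g : GL (Fin n) ℤ | IsOfFinOrder g} = ⊤ ∧
      Subgroup.normalClosure {g : GL (Fin n) ℤ | IsOfFinOrder g} = ⊤ := by
  have htop : Subgroup.closure {g : GL (Fin n) ℤ | IsOfFinOrder g} = ⊤ := by
    rw [Subgroup.eq_top_iff']
    intro g
    exact Stmt4Aux.main n 0 rfl g (fun j hj i => absurd hj (Nat.not_lt_zero _))
  refine ⟨htop, ?_⟩
  have hle : Subgroup.closure {g : GL (Fin n) ℤ | IsOfFinOrder g}
      ≤ Subgroup.normalClosure {g : GL (Fin n) ℤ | IsOfFinOrder g} :=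
    (Subgroup.closure_le _).mpr Subgroup.subset_normalClosure
  exact eq_top_iff.mpr (htop ▸ hle)
end

section
/- Let (M,g) be a complete Riemannian manifold isometric to a product (N,h) × ℝᵏ, where N is compact. Then every unit-speed line in M is of the form γ(t) = (x, t·v₁ + v₂) for some x ∈ N and v₁, v₂ ∈ ℝᵏ with ‖v₁‖ = 1. -/
/-!
Write a line as `t ↦ (f t, g t)`. If `f s ≠ f t` for some `s < t`, then `d(g s, g t) < t - s`;
running the line a further time `R` in both directions, the `ℝᵏ`-distance grows by at most `2R`
while the total distance grows by exactly `2R`, and for large `R` the bounded `N`-component cannot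
make up the difference. So `f` is constant, `g` is an isometric embedding of `ℝ` into a strictly
convex space, and such an embedding is affine.
-/

open Metric

theorem Isometry.exists_eq_smul_add {E : Type*} [NormedAddCommGroup E] [NormedSpace ℝ E]
    [StrictConvexSpace ℝ E] {g : ℝ → E} (hg : Isometry g) :
    ∃ v : E, ‖v‖ = 1 ∧ ∀ t : ℝ, g t = t • v + g 0 := by
  set φ := hg.affineIsometryOfStrictConvexSpace
  refine ⟨φ.linear 1, by simp, fun t => ?_⟩
  calc g t = φ.linear (t • 1) + φ 0 := by
        rw [smul_eq_mul, mul_one]; exact congrFun φ.toAffineMap.decomp t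
    _ = t • φ.linear 1 + g 0 := by rw [map_smul]; rfl

theorem dist_le_sub_of_sq_dist_add_sq_dist_eq {α β : Type*} [PseudoMetricSpace α]
    [PseudoMetricSpace β] {f : ℝ → α} {g : ℝ → β}
    (h : ∀ s t, dist (f s) (f t) ^ 2 + dist (g s) (g t) ^ 2 = (s - t) ^ 2) {s t : ℝ}
    (hst : s ≤ t) : dist (g s) (g t) ≤ t - s := by
  rw [← pow_le_pow_iff_left₀ dist_nonneg (sub_nonneg.2 hst) two_ne_zero, ← neg_sub, neg_sq,
    ← h s t]
  exact le_add_of_nonneg_left (sq_nonneg _)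

section BoundedFactor

variable {α β : Type*} [PseudoMetricSpace α] [BoundedSpace α] [PseudoMetricSpace β]
  {f : ℝ → α} {g : ℝ → β}

theorem mul_sub_dist_le_sq_diam_of_sq_dist_add_sq_dist_eq
    (h : ∀ s t, dist (f s) (f t) ^ 2 + dist (g s) (g t) ^ 2 = (s - t) ^ 2) {s t R : ℝ}
    (hst : s ≤ t) (hR : 0 ≤ R) :
    4 * R * (t - s - dist (g s) (g t)) ≤ diam (Set.univ : Set α) ^ 2 := by
  have hD : dist (f (s - R)) (f (t + R)) ≤ diam (Set.univ : Set α) :=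
    dist_le_diam_of_mem BoundedSpace.bounded_univ trivial trivial
  have hfar : dist (g (s - R)) (g (t + R)) ≤ R + dist (g s) (g t) + R := by
    calc dist (g (s - R)) (g (t + R))
        ≤ dist (g (s - R)) (g s) + dist (g s) (g t) + dist (g t) (g (t + R)) :=
          dist_triangle4 _ _ _ _
      _ ≤ (s - (s - R)) + dist (g s) (g t) + (t + R - t) := by
          gcongr <;> exact dist_le_sub_of_sq_dist_add_sq_dist_eq h (by linarith)
      _ = R + dist (g s) (g t) + R := by ring
  have hnear := dist_le_sub_of_sq_dist_add_sq_dist_eq h hst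
  nlinarith [h (s - R) (t + R), dist_nonneg (x := f (s - R)) (y := f (t + R)),
    dist_nonneg (x := g (s - R)) (y := g (t + R)), dist_nonneg (x := g s) (y := g t)]

theorem dist_eq_zero_of_sq_dist_add_sq_dist_eq
    (h : ∀ s t, dist (f s) (f t) ^ 2 + dist (g s) (g t) ^ 2 = (s - t) ^ 2) (s t : ℝ) :
    dist (f s) (f t) = 0 := by
  wlog hst : s ≤ t generalizing s t
  · rw [dist_comm]; exact this t s (le_of_not_ge hst)
  set D := diam (Set.univ : Set α)
  have hfar : t - s ≤ dist (g s) (g t) := by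
    by_contra! hlt
    set c := t - s - dist (g s) (g t)
    have hc : 0 < c := by linarith
    have := mul_sub_dist_le_sq_diam_of_sq_dist_add_sq_dist_eq h hst
      (R := (D ^ 2 + 1) / (4 * c)) (by positivity)
    have hR : 4 * ((D ^ 2 + 1) / (4 * c)) * c = D ^ 2 + 1 := by field_simp
    linarith
  have hg : dist (g s) (g t) = t - s :=
    le_antisymm (dist_le_sub_of_sq_dist_add_sq_dist_eq h hst) hfar
  have : dist (f s) (f t) ^ 2 = 0 := by
    linear_combination h s t - (dist (g s) (g t) + (t - s)) * hg
  exact pow_eq_zero_iff two_ne_zero |>.1 this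

end BoundedFactor

/-- In the ℓ²-product `N × ℝᵏ` of a compact (Riemannian) metric space `N` with
flat Euclidean space, every unit-speed line is of the form `γ t = (x, t • v₁ + v₂)` with
`‖v₁‖ = 1`. -/
theorem stmt6 {N : Type*} [MetricSpace N] [CompactSpace N] {k : ℕ}
    (γ : ℝ → N × EuclideanSpace ℝ (Fin k))
    (hline : ∀ s t : ℝ,
      Real.sqrt (dist (γ s).1 (γ t).1 ^ 2 + dist (γ s).2 (γ t).2 ^ 2) = |s - t|) :
    ∃ (x : N) (v₁ v₂ : EuclideanSpace ℝ (Fin k)),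
      ‖v₁‖ = 1 ∧ ∀ t : ℝ, γ t = (x, t • v₁ + v₂) := by
  have hsq : ∀ s t, dist (γ s).1 (γ t).1 ^ 2 + dist (γ s).2 (γ t).2 ^ 2 = (s - t) ^ 2 :=
    fun s t => by rw [← sq_abs (s - t), ← hline s t, Real.sq_sqrt (by positivity)]
  have hfst : ∀ t, (γ t).1 = (γ 0).1 :=
    fun t => dist_eq_zero.1 (dist_eq_zero_of_sq_dist_add_sq_dist_eq hsq t 0)
  have hsnd : Isometry fun t => (γ t).2 := Isometry.of_dist_eq fun s t => by
    simpa [hfst s, hfst t, Real.dist_eq] using hline s t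
  obtain ⟨v, hv, hγ⟩ := hsnd.exists_eq_smul_add
  exact ⟨(γ 0).1, v, (γ 0).2, hv, fun t => Prod.ext (hfst t) (hγ t)⟩
end
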